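/- arXiv:2511.21446 — 3 statements merged into one kernel-verified Lean document; each statement's English description precedes it below -/
import Mathlib

section
/- Let n2 < n3 be positive integers and 0 < q < 1. Define t(N) = 1 - (1-q)^N for natural numbers N, and fix N1 < N2 < N3 with n2 = N2 - N1 and n3 = N3 - N1. Then the map q ↦ (t(N3) - t(N1))/(t(N2) - t(N1)) is injective on (0,1). -/
open Finset

private lemma geom_aux (z : ℝ) (k : ℕ) :
    (1 - z) * ∑ i ∈ range k, z ^ i = 1 - z ^ k := by
  linear_combination (-1 : ℝ) * geom_sum_mul z k

private lemma key_lemma (m n : ℕ) (hm : 0 < m) (hmn : m < n) {x y : ℝ}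
    (hy : 0 < y) (hyx : y < x) (hx1 : x < 1) :
    (1 - y ^ n) * (1 - x ^ m) < (1 - x ^ n) * (1 - y ^ m) := by
  have hx0 : 0 < x := hy.trans hyx
  have hsum : (∑ i ∈ Ico m n, y ^ i) * (∑ j ∈ range m, x ^ j)
      < (∑ i ∈ Ico m n, x ^ i) * (∑ j ∈ range m, y ^ j) := by
    rw [Finset.sum_mul_sum, Finset.sum_mul_sum]
    refine Finset.sum_lt_sum_of_nonempty (Finset.nonempty_Ico.2 hmn) ?_
    intro i hi
    refine Finset.sum_lt_sum_of_nonempty (Finset.nonempty_range_iff.2 hm.ne') ?_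
    intro j hj
    have hji : j < i := lt_of_lt_of_le (Finset.mem_range.1 hj) (Finset.mem_Ico.1 hi).1
    have hidec : i = j + (i - j) := (Nat.add_sub_cancel' hji.le).symm
    rw [hidec, pow_add, pow_add]
    have hlt : y ^ (i - j) < x ^ (i - j) := by
      apply pow_lt_pow_left₀ hyx hy.le
      omega
    have hpos : (0:ℝ) < y ^ j * x ^ j := by positivity
    calc y ^ j * y ^ (i - j) * x ^ j = (y ^ j * x ^ j) * y ^ (i - j) := by ring
      _ < (y ^ j * x ^ j) * x ^ (i - j) := mul_lt_mul_of_pos_left hlt hpos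
      _ = x ^ j * x ^ (i - j) * y ^ j := by ring
  have hsplitx : ∑ i ∈ range n, x ^ i
      = ∑ i ∈ range m, x ^ i + ∑ i ∈ Ico m n, x ^ i :=
    (Finset.sum_range_add_sum_Ico _ hmn.le).symm
  have hsplity : ∑ i ∈ range n, y ^ i
      = ∑ i ∈ range m, y ^ i + ∑ i ∈ Ico m n, y ^ i :=
    (Finset.sum_range_add_sum_Ico _ hmn.le).symm
  have hsum2 : (∑ i ∈ range n, y ^ i) * (∑ j ∈ range m, x ^ j)
      < (∑ i ∈ range n, x ^ i) * (∑ j ∈ range m, y ^ j) := by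
    rw [hsplitx, hsplity]
    nlinarith [hsum]
  have h1x : (0:ℝ) < 1 - x := by linarith
  have h1y : (0:ℝ) < 1 - y := by linarith
  calc (1 - y ^ n) * (1 - x ^ m)
      = ((1 - y) * (1 - x)) * ((∑ i ∈ range n, y ^ i) * (∑ j ∈ range m, x ^ j)) := by
        rw [← geom_aux y n, ← geom_aux x m]; ring
    _ < ((1 - y) * (1 - x)) * ((∑ i ∈ range n, x ^ i) * (∑ j ∈ range m, y ^ j)) :=
        mul_lt_mul_of_pos_left hsum2 (mul_pos h1y h1x)
    _ = (1 - x ^ n) * (1 - y ^ m) := by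
        rw [← geom_aux x n, ← geom_aux y m]; ring

/-- Injectivity on `(0,1)` of the map
`q ↦ (t(N3) - t(N1))/(t(N2) - t(N1))` where `t(N) = 1 - (1-q)^N`. -/
theorem stmt_2 (N1 N2 N3 : ℕ) (h12 : N1 < N2) (h23 : N2 < N3) :
    Set.InjOn
      (fun q : ℝ =>
        ((1 - (1 - q) ^ N3) - (1 - (1 - q) ^ N1)) /
          ((1 - (1 - q) ^ N2) - (1 - (1 - q) ^ N1)))
      (Set.Ioo 0 1) := by
  set m := N2 - N1 with hm_def
  set n := N3 - N1 with hn_def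
  have hm : 0 < m := by omega
  have hmn : m < n := by omega
  have hval : ∀ q ∈ Set.Ioo (0:ℝ) 1,
      ((1 - (1 - q) ^ N3) - (1 - (1 - q) ^ N1)) /
          ((1 - (1 - q) ^ N2) - (1 - (1 - q) ^ N1))
        = (1 - (1 - q) ^ n) / (1 - (1 - q) ^ m) := by
    intro q hq
    obtain ⟨hq0, hq1⟩ := hq
    set x : ℝ := 1 - q with hx_def
    have hx0 : 0 < x := by simp [hx_def]; linarith
    have e3 : x ^ N3 = x ^ N1 * x ^ n := by rw [← pow_add]; congr 1; omega
    have e2 : x ^ N2 = x ^ N1 * x ^ m := by rw [← pow_add]; congr 1; omega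
    have enum : (1 - x ^ N3) - (1 - x ^ N1) = x ^ N1 * (1 - x ^ n) := by
      rw [e3]; ring
    have eden : (1 - x ^ N2) - (1 - x ^ N1) = x ^ N1 * (1 - x ^ m) := by
      rw [e2]; ring
    rw [enum, eden, mul_div_mul_left _ _ (by positivity : (x:ℝ) ^ N1 ≠ 0)]
  intro q1 hq1 q2 hq2 heq
  simp only at heq
  rw [hval q1 hq1, hval q2 hq2] at heq
  obtain ⟨hq10, hq11⟩ := hq1
  obtain ⟨hq20, hq21⟩ := hq2
  by_contra hne
  have hx1 : (0:ℝ) < 1 - q1 := by linarith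
  have hx2 : (0:ℝ) < 1 - q2 := by linarith
  have hden1 : (0:ℝ) < 1 - (1 - q1) ^ m :=
    sub_pos.2 (pow_lt_one₀ hx1.le (by linarith) hm.ne')
  have hden2 : (0:ℝ) < 1 - (1 - q2) ^ m :=
    sub_pos.2 (pow_lt_one₀ hx2.le (by linarith) hm.ne')
  rcases lt_or_gt_of_ne hne with h | h
  · -- q1 < q2, so 1 - q2 < 1 - q1
    have := key_lemma m n hm hmn hx2 (by linarith : 1 - q2 < 1 - q1) (by linarith)
    rw [div_eq_div_iff hden1.ne' hden2.ne'] at heq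
    nlinarith [this]
  · have := key_lemma m n hm hmn hx1 (by linarith : 1 - q1 < 1 - q2) (by linarith)
    rw [div_eq_div_iff hden1.ne' hden2.ne'] at heq
    nlinarith [this]
end

section
/- Consider the two-agent binary-choice continuous-time model with symmetric CCPs. Let α = P(1|0,0), β = P(1|0,1), γ = P(0|1,0), δ = P(0|1,1), all in (0,1), where P(v|y1,y2) is agent 1's probability of choosing v given the configuration. Define μ(0,0) = γδ/Z, μ(0,1) = μ(1,0) = αδ/Z, μ(1,1) = αβ/Z where Z = αβ + γδ + 2αδ. Then μ is a probability distribution (nonnegative, sums to 1) and satisfies the stationarity (global balance) equations of the Markov chain on {0,1}^2 whose transition rates from configuration y to y' (differing in exactly one coordinate a) equal P_a(y'_a | y). -/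
/-- In the symmetric two-agent binary-choice model with CCPs
`α = P(1|0,0)`, `β = P(1|0,1)`, `γ = P(0|1,0)`, `δ = P(0|1,1)`,
the vector `μ(0,0) = γδ/Z`, `μ(0,1) = μ(1,0) = αδ/Z`, `μ(1,1) = αβ/Z`,
`Z = αβ + γδ + 2αδ`, is a probability distribution that satisfies the
global balance (stationarity) equations of the continuous-time Markov chain on
`{0,1}²` whose transition rates change one coordinate `a` to `v` at rate
`P_a(v | y)` (with `P_2(v|y1,y2) = P_1(v|y2,y1)` by symmetry). -/
theorem stmt_8 (α β γ δ : ℝ)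
    (hα : α ∈ Set.Ioo (0 : ℝ) 1) (hβ : β ∈ Set.Ioo (0 : ℝ) 1)
    (hγ : γ ∈ Set.Ioo (0 : ℝ) 1) (hδ : δ ∈ Set.Ioo (0 : ℝ) 1) :
    let Z : ℝ := α * β + γ * δ + 2 * α * δ
    let μ00 : ℝ := γ * δ / Z
    let μ01 : ℝ := α * δ / Z
    let μ10 : ℝ := α * δ / Z
    let μ11 : ℝ := α * β / Z
    -- μ is a probability distribution
    (0 ≤ μ00 ∧ 0 ≤ μ01 ∧ 0 ≤ μ10 ∧ 0 ≤ μ11) ∧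
    (μ00 + μ01 + μ10 + μ11 = 1) ∧
    -- global balance at each configuration: outflow = inflow
    -- at (0,0): agent 1 moves to 1 at rate α, agent 2 moves to 1 at rate α;
    -- inflow from (1,0) at rate P₁(0|1,0)=γ and from (0,1) at rate P₂(0|0,1)=γ
    (μ00 * (α + α) = μ10 * γ + μ01 * γ) ∧
    -- at (0,1): outflow rates P₁(1|0,1)=β and P₂(0|0,1)=γ;
    -- inflow from (0,0) at rate P₂(1|0,0)=α and from (1,1) at rate P₁(0|1,1)=δ
    (μ01 * (β + γ) = μ00 * α + μ11 * δ) ∧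
    -- at (1,0): outflow rates P₁(0|1,0)=γ and P₂(1|1,0)=β;
    -- inflow from (0,0) at rate P₁(1|0,0)=α and from (1,1) at rate P₂(0|1,1)=δ
    (μ10 * (γ + β) = μ00 * α + μ11 * δ) ∧
    -- at (1,1): outflow rates δ + δ; inflow from (0,1) at rate β and (1,0) at rate β
    (μ11 * (δ + δ) = μ01 * β + μ10 * β) := by
  obtain ⟨ha, _⟩ := hα
  obtain ⟨hb, _⟩ := hβ
  obtain ⟨hc, _⟩ := hγ
  obtain ⟨hd, _⟩ := hδ
  intro Z μ00 μ01 μ10 μ11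
  have hZ : 0 < Z := by positivity
  have hZ' : Z ≠ 0 := ne_of_gt hZ
  refine ⟨⟨by positivity, by positivity, by positivity, by positivity⟩, ?_, ?_, ?_, ?_, ?_⟩ <;>
    simp only [μ00, μ01, μ10, μ11, Z] <;> field_simp <;> ring
end

section
/- Let r ∈ (0,1) with r = 1/2, and let p, s ∈ (0,1) with p ≠ 1/2 or s ≠ 1/2. Define Pr_same = 1/(1 + 2/( r/(1-p) + (1-r)/s )) and Pr_diff = 1/(1 + 2/( p/(1-r) + (1-s)/r )). Then Pr_same > Pr_diff. -/
/-- Similarity-based attention yields more coordination than difference-based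
attention: with `r = 1/2`, `p, s ∈ (0,1)` and `p ≠ 1/2` or `s ≠ 1/2`,
`Pr_same > Pr_diff`. -/
theorem stmt_10 (r p s : ℝ) (hr0 : r ∈ Set.Ioo (0 : ℝ) 1) (hr : r = 1 / 2)
    (hp : p ∈ Set.Ioo (0 : ℝ) 1) (hs : s ∈ Set.Ioo (0 : ℝ) 1)
    (hne : p ≠ 1 / 2 ∨ s ≠ 1 / 2) :
    1 / (1 + 2 / (r / (1 - p) + (1 - r) / s)) >
      1 / (1 + 2 / (p / (1 - r) + (1 - s) / r)) := by
  obtain ⟨hp0, hp1⟩ := hp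
  obtain ⟨hs0, hs1⟩ := hs
  subst hr
  have h1p : (0:ℝ) < 1 - p := by linarith
  have h1s : (0:ℝ) < 1 - s := by linarith
  have hA : (0:ℝ) < (1/2:ℝ) / (1 - p) + (1 - 1/2) / s := by positivity
  have hB : (0:ℝ) < p / (1 - 1/2:ℝ) + (1 - s) / (1/2:ℝ) := by positivity
  -- the two elementary inequalities
  have e1 : p / (1 - 1/2:ℝ) ≤ (1/2:ℝ) / (1 - p) := by
    rw [div_le_div_iff₀ (by norm_num) h1p]
    nlinarith [sq_nonneg (1 - 2*p)]
  have e2 : (1 - s) / (1/2:ℝ) ≤ (1 - 1/2:ℝ) / s := by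
    rw [div_le_div_iff₀ (by norm_num) hs0]
    nlinarith [sq_nonneg (1 - 2*s)]
  have hAB : p / (1 - 1/2:ℝ) + (1 - s) / (1/2:ℝ) <
      (1/2:ℝ) / (1 - p) + (1 - 1/2) / s := by
    rcases hne with h | h
    · have hne' : 1 - 2*p ≠ 0 := fun hh => h (by linarith)
      have hsq : 0 < (1 - 2*p)^2 := by positivity
      have e1' : p / (1 - 1/2:ℝ) < (1/2:ℝ) / (1 - p) := by
        rw [div_lt_div_iff₀ (by norm_num) h1p]
        nlinarith
      linarith
    · have hne' : 1 - 2*s ≠ 0 := fun hh => h (by linarith)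
      have hsq : 0 < (1 - 2*s)^2 := by positivity
      have e2' : (1 - s) / (1/2:ℝ) < (1 - 1/2:ℝ) / s := by
        rw [div_lt_div_iff₀ (by norm_num) hs0]
        nlinarith
      linarith
  have h2 : 2 / ((1/2:ℝ) / (1 - p) + (1 - 1/2) / s) <
      2 / (p / (1 - 1/2:ℝ) + (1 - s) / (1/2:ℝ)) :=
    div_lt_div_of_pos_left (by norm_num) hB hAB
  have hX : (0:ℝ) < 1 + 2 / ((1/2:ℝ) / (1 - p) + (1 - 1/2) / s) := by positivity
  exact one_div_lt_one_div_of_lt hX (by linarith)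
end
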